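/- Let A be a Banach lattice algebra with identity e and let p, q be order idempotents of A. Then: pq = qp; pq is an order idempotent and pq equals the infimum p ⊓ q in A; p + q − pq is an order idempotent and equals the supremum p ⊔ q in A; and e − p is an order idempotent. Consequently the set of order idempotents of A forms a Boolean algebra with these operations, minimum 0 and maximum e, whose suprema and infima coincide with those of A. -/

import Mathlib

/-- An *order idempotent* of a Banach lattice algebra with identity `e` is an element
`p` with `p² = p` and `0 ≤ p ≤ e`. -/
def IsOrderIdempotent {A : Type*} [NormedAddCommGroup A] [Lattice A] [HasSolidNorm A]
    [IsOrderedAddMonoid A] [NormedSpace ℝ A]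
    (mul : A →ₗ[ℝ] A →ₗ[ℝ] A) (e p : A) : Prop :=
  mul p p = p ∧ 0 ≤ p ∧ p ≤ e

/-!
Positivity of the product makes it monotone in each argument. If `r` is an order idempotent
and `0 ≤ x ≤ r`, then `(e - r) x ≥ 0` and `(e - r)(r - x) = r x - x ≥ 0` force `r x = x`; applied
to `x = r ⊓ s` this gives `r ⊓ s ≤ r s`, while `r s ≤ r e = r` and `r s ≤ e s = s`. Hence
`p q = p ⊓ q = q p`, and the remaining claims are algebra: `e - p` is idempotent, and
`p + q - p q = e - (e - p)(e - q)`.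
-/

section PositiveBilinear

variable {R A : Type*} [CommSemiring R] [AddCommGroup A] [Lattice A] [IsOrderedAddMonoid A]
  [Module R A] {mul : A →ₗ[R] A →ₗ[R] A}

theorem bilin_mul_le_mul_of_nonneg_right
    (hmul_nonneg : ∀ a b : A, 0 ≤ a → 0 ≤ b → 0 ≤ mul a b)
    {a b c : A} (hab : a ≤ b) (hc : 0 ≤ c) : mul a c ≤ mul b c := by
  have h := hmul_nonneg (b - a) c (sub_nonneg.mpr hab) hc
  rwa [map_sub, LinearMap.sub_apply, sub_nonneg] at h

theorem bilin_mul_le_mul_of_nonneg_left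
    (hmul_nonneg : ∀ a b : A, 0 ≤ a → 0 ≤ b → 0 ≤ mul a b)
    {a b c : A} (hab : a ≤ b) (hc : 0 ≤ c) : mul c a ≤ mul c b := by
  have h := hmul_nonneg c (b - a) hc (sub_nonneg.mpr hab)
  rwa [map_sub, sub_nonneg] at h

theorem mul_eq_self_of_nonneg_of_le_idempotent
    (hmul_nonneg : ∀ a b : A, 0 ≤ a → 0 ≤ b → 0 ≤ mul a b)
    {e : A} (hone_mul : ∀ a : A, mul e a = a)
    {r x : A} (hr : mul r r = r) (hre : r ≤ e) (hx : 0 ≤ x) (hxr : x ≤ r) :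
    mul r x = x := by
  have hle : mul r x ≤ x := by
    have h := hmul_nonneg (e - r) x (sub_nonneg.mpr hre) hx
    rwa [map_sub, LinearMap.sub_apply, hone_mul, sub_nonneg] at h
  have hge : x ≤ mul r x := by
    have h := hmul_nonneg (e - r) (r - x) (sub_nonneg.mpr hre) (sub_nonneg.mpr hxr)
    rwa [map_sub, map_sub, LinearMap.sub_apply, LinearMap.sub_apply, hone_mul, hone_mul, hr,
      sub_self, zero_sub, neg_sub, sub_nonneg] at h
  exact le_antisymm hle hge

theorem mul_eq_inf_of_idempotent
    (hmul_nonneg : ∀ a b : A, 0 ≤ a → 0 ≤ b → 0 ≤ mul a b)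
    {e : A} (hone_mul : ∀ a : A, mul e a = a) (hmul_one : ∀ a : A, mul a e = a)
    {r s : A} (hr : mul r r = r) (hr0 : 0 ≤ r) (hre : r ≤ e) (hs0 : 0 ≤ s) (hse : s ≤ e) :
    mul r s = r ⊓ s := by
  refine le_antisymm (le_inf ?_ ?_) ?_
  · simpa only [hmul_one] using bilin_mul_le_mul_of_nonneg_left hmul_nonneg hse hr0
  · simpa only [hone_mul] using bilin_mul_le_mul_of_nonneg_right hmul_nonneg hre hs0
  · calc r ⊓ s = mul r (r ⊓ s) :=
          (mul_eq_self_of_nonneg_of_le_idempotent hmul_nonneg hone_mul hr hre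
            (le_inf hr0 hs0) inf_le_left).symm
      _ ≤ mul r s := bilin_mul_le_mul_of_nonneg_left hmul_nonneg inf_le_right hr0

end PositiveBilinear

namespace IsOrderIdempotent

variable {A : Type*} [NormedAddCommGroup A] [Lattice A] [HasSolidNorm A]
  [IsOrderedAddMonoid A] [NormedSpace ℝ A] {mul : A →ₗ[ℝ] A →ₗ[ℝ] A} {e p q : A}

theorem mul_eq_inf (hmul_nonneg : ∀ a b : A, 0 ≤ a → 0 ≤ b → 0 ≤ mul a b)
    (hone_mul : ∀ a : A, mul e a = a) (hmul_one : ∀ a : A, mul a e = a)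
    (hp : IsOrderIdempotent mul e p) (hq : IsOrderIdempotent mul e q) :
    mul p q = p ⊓ q :=
  mul_eq_inf_of_idempotent hmul_nonneg hone_mul hmul_one hp.1 hp.2.1 hp.2.2 hq.2.1 hq.2.2

theorem mul_comm (hmul_nonneg : ∀ a b : A, 0 ≤ a → 0 ≤ b → 0 ≤ mul a b)
    (hone_mul : ∀ a : A, mul e a = a) (hmul_one : ∀ a : A, mul a e = a)
    (hp : IsOrderIdempotent mul e p) (hq : IsOrderIdempotent mul e q) :
    mul p q = mul q p := by
  rw [mul_eq_inf hmul_nonneg hone_mul hmul_one hp hq,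
    mul_eq_inf hmul_nonneg hone_mul hmul_one hq hp, inf_comm]

theorem add_sub_mul_eq_sup (hmul_nonneg : ∀ a b : A, 0 ≤ a → 0 ≤ b → 0 ≤ mul a b)
    (hone_mul : ∀ a : A, mul e a = a) (hmul_one : ∀ a : A, mul a e = a)
    (hp : IsOrderIdempotent mul e p) (hq : IsOrderIdempotent mul e q) :
    p + q - mul p q = p ⊔ q := by
  rw [mul_eq_inf hmul_nonneg hone_mul hmul_one hp hq, ← inf_add_sup p q, add_sub_cancel_left]

protected theorem mul (hmul_assoc : ∀ a b c : A, mul (mul a b) c = mul a (mul b c))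
    (hmul_nonneg : ∀ a b : A, 0 ≤ a → 0 ≤ b → 0 ≤ mul a b)
    (hone_mul : ∀ a : A, mul e a = a) (hmul_one : ∀ a : A, mul a e = a)
    (hp : IsOrderIdempotent mul e p) (hq : IsOrderIdempotent mul e q) :
    IsOrderIdempotent mul e (mul p q) := by
  refine ⟨?_, hmul_nonneg p q hp.2.1 hq.2.1, ?_⟩
  · calc mul (mul p q) (mul p q) = mul p (mul (mul q p) q) := by rw [hmul_assoc, hmul_assoc]
      _ = mul (mul p p) (mul q q) := by
          rw [← mul_comm hmul_nonneg hone_mul hmul_one hp hq, hmul_assoc, hmul_assoc]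
      _ = mul p q := by rw [hp.1, hq.1]
  · rw [mul_eq_inf hmul_nonneg hone_mul hmul_one hp hq]
    exact inf_le_left.trans hp.2.2

theorem compl (hone_mul : ∀ a : A, mul e a = a) (hmul_one : ∀ a : A, mul a e = a)
    (hp : IsOrderIdempotent mul e p) : IsOrderIdempotent mul e (e - p) := by
  refine ⟨?_, sub_nonneg.mpr hp.2.2, sub_le_self e hp.2.1⟩
  simp only [map_sub, LinearMap.sub_apply, hone_mul, hmul_one, hp.1, sub_self, sub_zero]

theorem add_sub_mul (hmul_assoc : ∀ a b c : A, mul (mul a b) c = mul a (mul b c))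
    (hmul_nonneg : ∀ a b : A, 0 ≤ a → 0 ≤ b → 0 ≤ mul a b)
    (hone_mul : ∀ a : A, mul e a = a) (hmul_one : ∀ a : A, mul a e = a)
    (hp : IsOrderIdempotent mul e p) (hq : IsOrderIdempotent mul e q) :
    IsOrderIdempotent mul e (p + q - mul p q) := by
  have hde_morgan : p + q - mul p q = e - mul (e - p) (e - q) := by
    simp only [map_sub, LinearMap.sub_apply, hone_mul, hmul_one]
    abel
  rw [hde_morgan]
  exact ((hp.compl hone_mul hmul_one).mul hmul_assoc hmul_nonneg hone_mul hmul_one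
    (hq.compl hone_mul hmul_one)).compl hone_mul hmul_one

end IsOrderIdempotent

theorem order_idempotents_boolean_algebra_general
    {A : Type*} [NormedAddCommGroup A] [Lattice A] [HasSolidNorm A]
    [IsOrderedAddMonoid A] [NormedSpace ℝ A]
    (mul : A →ₗ[ℝ] A →ₗ[ℝ] A)
    (mul_assoc : ∀ a b c : A, mul (mul a b) c = mul a (mul b c))
    (mul_nonneg : ∀ a b : A, 0 ≤ a → 0 ≤ b → 0 ≤ mul a b)
    (e : A) (one_mul : ∀ a : A, mul e a = a) (mul_one : ∀ a : A, mul a e = a)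
    (p q : A) (hp : IsOrderIdempotent mul e p) (hq : IsOrderIdempotent mul e q) :
    mul p q = mul q p ∧
    IsOrderIdempotent mul e (mul p q) ∧ mul p q = p ⊓ q ∧
    IsOrderIdempotent mul e (p + q - mul p q) ∧ p + q - mul p q = p ⊔ q ∧
    IsOrderIdempotent mul e (e - p) :=
  ⟨hp.mul_comm mul_nonneg one_mul mul_one hq,
    hp.mul mul_assoc mul_nonneg one_mul mul_one hq,
    hp.mul_eq_inf mul_nonneg one_mul mul_one hq,
    hp.add_sub_mul mul_assoc mul_nonneg one_mul mul_one hq,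
    hp.add_sub_mul_eq_sup mul_nonneg one_mul mul_one hq,
    hp.compl one_mul mul_one⟩

/-- Alekhno. In a Banach lattice algebra with identity `e`, the
order idempotents commute and form a Boolean algebra with `p ∧ q = pq`,
`p ∨ q = p + q − pq` and complement `e − p`, whose suprema and infima coincide with
those of `A`. -/
theorem order_idempotents_boolean_algebra
    {A : Type*} [NormedAddCommGroup A] [Lattice A] [HasSolidNorm A]
    [IsOrderedAddMonoid A] [NormedSpace ℝ A]
    [PosSMulStrictMono ℝ A] [CompleteSpace A]
    (mul : A →ₗ[ℝ] A →ₗ[ℝ] A)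
    (mul_assoc : ∀ a b c : A, mul (mul a b) c = mul a (mul b c))
    (norm_mul_le : ∀ a b : A, ‖mul a b‖ ≤ ‖a‖ * ‖b‖)
    (mul_nonneg : ∀ a b : A, 0 ≤ a → 0 ≤ b → 0 ≤ mul a b)
    (e : A) (one_mul : ∀ a : A, mul e a = a) (mul_one : ∀ a : A, mul a e = a)
    (norm_e : ‖e‖ = 1)
    (p q : A) (hp : IsOrderIdempotent mul e p) (hq : IsOrderIdempotent mul e q) :
    mul p q = mul q p ∧
    IsOrderIdempotent mul e (mul p q) ∧ mul p q = p ⊓ q ∧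
    IsOrderIdempotent mul e (p + q - mul p q) ∧ p + q - mul p q = p ⊔ q ∧
    IsOrderIdempotent mul e (e - p) :=
  order_idempotents_boolean_algebra_general mul mul_assoc mul_nonneg e one_mul mul_one p q hp hq
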